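/- Let m ≥ 1 and let e_1,…,e_m be nonnegative integers with e_1 + ⋯ + e_m = m. Then the monomial x_1^{e_1}⋯x_m^{e_m} equals 0 in Q_m if and only if there exist integers d and D with 1 ≤ d < D ≤ m such that e_1 + ⋯ + e_d = D, e_i = 0 for all i with d < i ≤ D, and the element x_{D+1}^{e_{D+1}}⋯x_m^{e_m} equals x_{D+1}x_{D+2}⋯x_m in Q_m. -/

import Mathlib

/-!
Put `x_0 = 0`; then `x_i ^ 2 = x_{i-1} x_i` for all `i ≤ m`, and pushing `x_i` down a block gives
`x_i · x_s ⋯ x_b = x_{s-1} ⋯ x_b` whenever `s ≤ i + 1 ≤ b + 1`. Feeding in the factors of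
`x_s^{e_s} ⋯ x_b^{e_b}` from the left, a monomial whose partial sums exceed the lengths of the
corresponding initial segments by at most `c`, with total excess exactly `c`, equals
`x_{s-c} ⋯ x_b`. So a degree-`m` monomial equals `x_1 ⋯ x_m` when `e_1 + ⋯ + e_j ≤ j` for all `j`,
and is `0` otherwise (apply the block formula up to an index of maximal excess). Finally
`x_1 ⋯ x_m ≠ 0`: the functional summing the coefficients of the monomials with `e_1 + ⋯ + e_j ≤ j`
for all `j` vanishes on the ideal, since `u · x_i^2` and `u · x_{i-1} x_i` satisfy this condition
together and `u · x_1^2` never does. Taking `D - 1` to be the last index with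
`e_1 + ⋯ + e_{D-1} > D - 1` turns "some partial sum exceeds its index" into the stated condition.
-/

open MvPolynomial Finset

noncomputable section

open Fin.NatCast in
/-- The defining ideal of `Q_m`: generated by `x_1^2` and `x_i^2 - x_{i-1} x_i` for `2 ≤ i ≤ m`
(variables are 1-based; `X ((i-1 : ℕ) : Fin m)` is `x_i`). -/
def Qrel (m : ℕ) [NeZero m] : Ideal (MvPolynomial (Fin m) (ZMod 2)) :=
  Ideal.span ((fun i : ℕ =>
      X ((i - 1 : ℕ) : Fin m) ^ 2 -
        (if i = 1 then 0 else X ((i - 2 : ℕ) : Fin m) * X ((i - 1 : ℕ) : Fin m))) ''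
    Set.Icc 1 m)

/-- The ring `Q_m`. -/
abbrev Qring (m : ℕ) [NeZero m] : Type :=
  MvPolynomial (Fin m) (ZMod 2) ⧸ Qrel m

open Fin.NatCast in
/-- The image of `x_i` (1-based, for `1 ≤ i ≤ m`) in `Q_m`. -/
def xQ (m : ℕ) [NeZero m] (i : ℕ) : Qring m :=
  Ideal.Quotient.mk (Qrel m) (X ((i - 1 : ℕ) : Fin m))

@[to_additive]
theorem Finset.prod_Icc_eq_mul_prod_Icc_succ {M : Type*} [CommMonoid M] {a b : ℕ} (h : a ≤ b)
    (f : ℕ → M) : ∏ i ∈ Icc a b, f i = f a * ∏ i ∈ Icc (a + 1) b, f i := by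
  rw [Icc_add_one_left_eq_Ioc, mul_prod_Ioc_eq_prod_Icc h]

@[to_additive]
theorem Finset.prod_Icc_mul_prod_Icc_succ {M : Type*} [CommMonoid M] {a k b : ℕ}
    (hak : a ≤ k + 1) (hkb : k ≤ b) (f : ℕ → M) :
    (∏ i ∈ Icc a k, f i) * ∏ i ∈ Icc (k + 1) b, f i = ∏ i ∈ Icc a b, f i := by
  simp only [← Ico_add_one_right_eq_Icc]
  exact prod_Ico_consecutive f hak (by omega)

section Chain

variable {M : Type*} [CommMonoidWithZero M] {m : ℕ} {x : ℕ → M}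

theorem mul_prod_Icc_of_sq_eq (hx0 : x 0 = 0) (hsq : ∀ i ≤ m, x i ^ 2 = x (i - 1) * x i)
    {i s b : ℕ} (hsi : s ≤ i + 1) (hib : i ≤ b) (hbm : b ≤ m) :
    x i * ∏ t ∈ Icc s b, x t = ∏ t ∈ Icc (s - 1) b, x t := by
  induction h : i + 1 - s generalizing s with
  | zero =>
    rw [show s - 1 = i by omega, prod_Icc_eq_mul_prod_Icc_succ hib, show i + 1 = s by omega]
  | succ n ih =>
    rw [prod_Icc_eq_mul_prod_Icc_succ (by omega : s ≤ b), mul_left_comm,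
      ih (by omega) (by omega), Nat.add_sub_cancel,
      prod_Icc_eq_mul_prod_Icc_succ (by omega : s ≤ b), ← mul_assoc, ← sq, hsq s (by omega),
      mul_assoc, ← prod_Icc_eq_mul_prod_Icc_succ (by omega : s ≤ b)]
    rcases s with _ | s
    · simp [prod_Icc_eq_mul_prod_Icc_succ (Nat.zero_le b), hx0]
    · rw [Nat.add_sub_cancel, prod_Icc_eq_mul_prod_Icc_succ (by omega : s ≤ b)]

theorem pow_mul_prod_Icc_of_sq_eq (hx0 : x 0 = 0) (hsq : ∀ i ≤ m, x i ^ 2 = x (i - 1) * x i)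
    {i s b : ℕ} (hsi : s ≤ i + 1) (hib : i ≤ b) (hbm : b ≤ m) (k : ℕ) :
    x i ^ k * ∏ t ∈ Icc s b, x t = ∏ t ∈ Icc (s - k) b, x t := by
  induction k with
  | zero => simp
  | succ k ih =>
    rw [pow_succ', mul_assoc, ih, mul_prod_Icc_of_sq_eq hx0 hsq (by omega) hib hbm, Nat.sub_sub]

theorem prod_pow_Icc_of_sq_eq (hx0 : x 0 = 0) (hsq : ∀ i ≤ m, x i ^ 2 = x (i - 1) * x i)
    (e : ℕ → ℕ) {s b c : ℕ} (hbm : b ≤ m)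
    (hprefix : ∀ j ∈ Icc s b, ∑ i ∈ Icc s j, e i ≤ j + 1 - s + c)
    (htotal : ∑ i ∈ Icc s b, e i = b + 1 - s + c) :
    ∏ i ∈ Icc s b, x i ^ e i = ∏ i ∈ Icc (s - c) b, x i := by
  induction h : b + 1 - s generalizing s c with
  | zero =>
    have hempty : Icc s b = ∅ := Icc_eq_empty (by omega)
    rw [hempty, sum_empty] at htotal
    rw [hempty, show c = 0 by omega, Nat.sub_zero, hempty, prod_empty, prod_empty]
  | succ n ih =>
    have hsb : s ≤ b := by omega
    have hes : e s ≤ c + 1 := by simpa [add_comm] using hprefix s (by simp; omega)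
    have hsplit : ∀ j, s ≤ j → ∑ i ∈ Icc s j, e i = e s + ∑ i ∈ Icc (s + 1) j, e i :=
      fun j hj => sum_Icc_eq_add_sum_Icc_succ hj e
    have hprefix' : ∀ j ∈ Icc (s + 1) b,
        ∑ i ∈ Icc (s + 1) j, e i ≤ j + 1 - (s + 1) + (c + 1 - e s) := by
      intro j hj
      rw [mem_Icc] at hj
      have := hprefix j (mem_Icc.2 ⟨by omega, hj.2⟩)
      rw [hsplit j (by omega)] at this
      omega
    have hrest := ih hprefix' (by rw [hsplit b hsb] at htotal; omega) (by omega)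
    rw [prod_Icc_eq_mul_prod_Icc_succ hsb, hrest,
      pow_mul_prod_Icc_of_sq_eq hx0 hsq (by omega) hsb hbm,
      show s + 1 - (c + 1 - e s) - e s = s - c by omega]

theorem prod_pow_Icc_eq_zero_of_sq_eq (hx0 : x 0 = 0) (hsq : ∀ i ≤ m, x i ^ 2 = x (i - 1) * x i)
    (e : ℕ → ℕ) {j b : ℕ} (hj : j < ∑ i ∈ Icc 1 j, e i) (hjb : j ≤ b) (hbm : b ≤ m) :
    ∏ i ∈ Icc 1 b, x i ^ e i = 0 := by
  have hj1 : 1 ≤ j := Nat.pos_of_ne_zero (by rintro rfl; simp at hj)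
  obtain ⟨k, hk, hmax⟩ := exists_max_image (Icc 1 j) (fun k => ∑ i ∈ Icc 1 k, e i - k)
    ⟨j, mem_Icc.2 ⟨hj1, le_rfl⟩⟩
  have hkj := (mem_Icc.1 hk).2
  set c := ∑ i ∈ Icc 1 k, e i - k
  have hc : 1 ≤ c := by have := hmax j (mem_Icc.2 ⟨hj1, le_rfl⟩); omega
  have hhead : ∏ i ∈ Icc 1 k, x i ^ e i = 0 := by
    rw [prod_pow_Icc_of_sq_eq hx0 hsq e (c := c) (by omega) ?_ (by omega), show 1 - c = 0 by omega,
      prod_Icc_eq_mul_prod_Icc_succ (Nat.zero_le k), hx0, zero_mul]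
    intro l hl
    have := hmax l (by simp at hl ⊢; omega)
    omega
  rw [← prod_Icc_mul_prod_Icc_succ (by omega : 1 ≤ k + 1) (by omega : k ≤ b), hhead, zero_mul]

end Chain

theorem exists_gap_of_lt_sum_Icc {m : ℕ} (e : ℕ → ℕ) (he : ∑ i ∈ Icc 1 m, e i = m) {j : ℕ}
    (hjm : j ≤ m) (hj : j < ∑ i ∈ Icc 1 j, e i) :
    ∃ d D, 1 ≤ d ∧ d < D ∧ D ≤ m ∧ ∑ i ∈ Icc 1 d, e i = D ∧ (∀ i, d < i → i ≤ D → e i = 0) ∧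
      ∑ i ∈ Icc 1 D, e i = D ∧ ∀ k, D ≤ k → k ≤ m → ∑ i ∈ Icc 1 k, e i ≤ k := by
  have hsucc : ∀ k, ∑ i ∈ Icc 1 (k + 1), e i = ∑ i ∈ Icc 1 k, e i + e (k + 1) :=
    fun k => sum_Icc_succ_top (by omega) e
  set excess : ℕ → Prop := fun k => k < ∑ i ∈ Icc 1 k, e i
  set j₀ := Nat.findGreatest excess m
  have hj₀ : j₀ < ∑ i ∈ Icc 1 j₀, e i := Nat.findGreatest_spec (P := excess) hjm hj
  have hafter : ∀ k, j₀ < k → k ≤ m → ∑ i ∈ Icc 1 k, e i ≤ k :=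
    fun k hk hkm => not_lt.1 (Nat.findGreatest_is_greatest (P := excess) hk hkm)
  have hj₀m : j₀ < m :=
    (Nat.findGreatest_le m).lt_of_ne fun h => by change j₀ = m at h; rw [h, he] at hj₀; omega
  have hnext := hafter (j₀ + 1) (by omega) hj₀m
  rw [hsucc] at hnext
  have hsum_j₀ : ∑ i ∈ Icc 1 j₀, e i = j₀ + 1 := by omega
  obtain ⟨i₀, hi₀, hei₀⟩ := exists_ne_zero_of_sum_ne_zero (s := Icc 1 j₀) (f := e) (by omega)
  set d := Nat.findGreatest (fun i => e i ≠ 0) j₀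
  have hd1 : 1 ≤ d := (mem_Icc.1 hi₀).1.trans (Nat.le_findGreatest (mem_Icc.1 hi₀).2 hei₀)
  have hdj₀ : d ≤ j₀ := Nat.findGreatest_le j₀
  have hgap : ∀ i, d < i → i ≤ j₀ + 1 → e i = 0 := by
    intro i hdi hi
    rcases Nat.lt_or_ge j₀ i with h | h
    · rw [show i = j₀ + 1 by omega]
      omega
    · exact not_not.1 (Nat.findGreatest_is_greatest hdi h)
  have hconst : ∀ k, d ≤ k → k ≤ j₀ + 1 → ∑ i ∈ Icc 1 k, e i = ∑ i ∈ Icc 1 d, e i := by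
    intro k hdk
    induction k, hdk using Nat.le_induction with
    | base => exact fun _ => rfl
    | succ k hdk ih => intro hk; rw [hsucc, hgap (k + 1) (by omega) hk, add_zero, ih (by omega)]
  have hd : ∑ i ∈ Icc 1 d, e i = j₀ + 1 := by rw [← hconst j₀ hdj₀ (by omega), hsum_j₀]
  refine ⟨d, j₀ + 1, hd1, by omega, by omega, hd, hgap, by rw [hconst _ (by omega) le_rfl, hd],
    fun k hk hkm => hafter k (by omega) hkm⟩

section PrefixBounded

open Finsupp (single)

variable {m : ℕ} {R : Type*} [CommRing R]

def PrefixBounded (u : Fin m →₀ ℕ) : Prop :=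
  ∀ j : Fin m, ∑ i ∈ Iic j, u i ≤ (j : ℕ) + 1

instance : DecidablePred (PrefixBounded (m := m)) := fun _ => Fintype.decidableForallFintype

variable (R) in
def prefixBoundedCoeffSum : MvPolynomial (Fin m) R →+ R :=
  (Finsupp.liftAddHom fun u => if PrefixBounded u then AddMonoidHom.id R else 0).comp
    AddMonoidAlgebra.coeffAddEquiv.toAddMonoidHom

theorem prefixBoundedCoeffSum_monomial (u : Fin m →₀ ℕ) (c : R) :
    prefixBoundedCoeffSum R (monomial u c) = if PrefixBounded u then c else 0 := by
  rw [← single_eq_monomial]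
  show Finsupp.liftAddHom _ (single u c) = _
  rw [Finsupp.liftAddHom_apply_single]
  split <;> rfl

theorem sum_Iic_add_single (v : Fin m →₀ ℕ) (a j : Fin m) :
    ∑ i ∈ Iic j, (v + single a 1 : Fin m →₀ ℕ) i = ∑ i ∈ Iic j, v i + if a ≤ j then 1 else 0 := by
  simp [sum_add_distrib, Finsupp.single_apply]

theorem prefixBounded_add_single_iff {v : Fin m →₀ ℕ} {a b : Fin m} (hab : (a : ℕ) = b + 1)
    (hva : 1 ≤ v a) :
    PrefixBounded (v + single a 1) ↔ PrefixBounded (v + single b 1) := by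
  have hba : b ≤ a := Fin.le_def.2 (by omega)
  have hab' : ¬ a ≤ b := fun h => by rw [Fin.le_def] at h; omega
  have hle : ∀ j : Fin m, j ≠ b → (a ≤ j ↔ b ≤ j) := by
    intro j hj
    simp only [Fin.le_def, ne_eq, Fin.ext_iff] at hj ⊢
    omega
  have hva_add : ∑ i ∈ Iic b, v i + v a ≤ ∑ i ∈ Iic a, v i := by
    have hnot : a ∉ Iic b := by simpa using hab'
    have := sum_le_sum_of_subset (f := v)
      (insert_subset (Finset.mem_Iic.2 le_rfl) (Iic_subset_Iic.2 hba))
    rwa [sum_insert hnot, add_comm] at this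
  simp only [PrefixBounded, sum_Iic_add_single]
  constructor
  · intro h j
    by_cases hj : j = b
    · have := h a
      simp only [hj, le_refl, if_true] at this ⊢
      omega
    · simpa only [hle j hj] using h j
  · intro h j
    by_cases hj : j = b
    · have := h b
      simp only [hj, le_refl, if_true, hab', if_false] at this ⊢
      omega
    · simpa only [hle j hj] using h j

theorem not_prefixBounded_add_single_two {a : Fin m} (ha : (a : ℕ) = 0) (v : Fin m →₀ ℕ) :
    ¬ PrefixBounded (v + single a 2) := by
  intro h
  have := (single_le_sum (f := fun i => (v + single a 2 : Fin m →₀ ℕ) i)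
    (fun _ _ => Nat.zero_le _) (Finset.mem_Iic.2 le_rfl)).trans (h a)
  simp [ha] at this

theorem prefixBoundedCoeffSum_mul_X_sq {a : Fin m} (ha : (a : ℕ) = 0) (p : MvPolynomial (Fin m) R) :
    prefixBoundedCoeffSum R (p * X a ^ 2) = 0 := by
  induction p using MvPolynomial.induction_on' with
  | add p q hp hq => rw [add_mul, map_add, hp, hq, add_zero]
  | monomial u c =>
    rw [X_pow_eq_monomial, monomial_mul, mul_one, prefixBoundedCoeffSum_monomial,
      if_neg (not_prefixBounded_add_single_two ha u)]

theorem prefixBoundedCoeffSum_mul_X_sq_sub {a b : Fin m} (hab : (a : ℕ) = b + 1)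
    (p : MvPolynomial (Fin m) R) :
    prefixBoundedCoeffSum R (p * (X a ^ 2 - X b * X a)) = 0 := by
  induction p using MvPolynomial.induction_on' with
  | add p q hp hq => rw [add_mul, map_add, hp, hq, add_zero]
  | monomial u c =>
    have hXX : (X b * X a : MvPolynomial (Fin m) R) = monomial (single b 1 + single a 1) 1 := by
      rw [X, X, monomial_mul, mul_one]
    have hsq : u + single a 2 = u + single a 1 + single a 1 := by
      rw [add_assoc, ← Finsupp.single_add]
    have hmix : u + (single b 1 + single a 1) = u + single a 1 + single b 1 := by
      abel
    rw [X_pow_eq_monomial, hXX, mul_sub, monomial_mul, monomial_mul, mul_one, map_sub,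
      prefixBoundedCoeffSum_monomial, prefixBoundedCoeffSum_monomial, hsq, hmix]
    have hiff := prefixBounded_add_single_iff (v := u + single a 1) hab (by simp)
    simp only [hiff, sub_self]

theorem prefixBounded_sum_single_one : PrefixBounded (∑ j : Fin m, single j 1) := by
  intro j
  simp [Finsupp.finsetSum_apply, Finsupp.single_apply]

end PrefixBounded

section Qring

open Fin.NatCast

variable (m : ℕ) [NeZero m]

theorem xQ_sq {i : ℕ} (hi : i ∈ Icc 1 m) :
    xQ m i ^ 2 = if i = 1 then 0 else xQ m (i - 1) * xQ m i := by
  have hgen := Ideal.Quotient.eq_zero_iff_mem.2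
    (Ideal.subset_span ⟨i, by simpa using hi, rfl⟩ : _ ∈ Qrel m)
  rw [map_sub, sub_eq_zero, map_pow, apply_ite (Ideal.Quotient.mk _), map_zero, map_mul] at hgen
  rw [xQ, xQ, show i - 1 - 1 = i - 2 by omega]
  exact hgen

/-- Setting `x_0 = 0` makes the relations of `Q_m` uniform: `x_i ^ 2 = x_{i-1} x_i` for `i ≤ m`. -/
def xQ₀ : ℕ → Qring m := Function.update (xQ m) 0 0

theorem xQ₀_of_pos {i : ℕ} (hi : 0 < i) : xQ₀ m i = xQ m i :=
  Function.update_of_ne hi.ne' _ _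

theorem xQ₀_sq {i : ℕ} (hi : i ≤ m) : xQ₀ m i ^ 2 = xQ₀ m (i - 1) * xQ₀ m i := by
  rcases Nat.lt_trichotomy i 1 with h | rfl | h
  · simp [xQ₀, show i = 0 by omega]
  · simp [xQ_sq m (mem_Icc.2 ⟨le_rfl, hi⟩), xQ₀]
  · rw [xQ₀_of_pos m (by omega), xQ₀_of_pos m (by omega), xQ_sq m (mem_Icc.2 ⟨h.le, hi⟩),
      if_neg h.ne']

theorem prefixBoundedCoeffSum_eq_zero_of_mem_Qrel {p : MvPolynomial (Fin m) (ZMod 2)}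
    (hp : p ∈ Qrel m) :
    prefixBoundedCoeffSum (ZMod 2) p = 0 := by
  suffices ∀ r, prefixBoundedCoeffSum (ZMod 2) (r * p) = 0 by simpa using this 1
  induction hp using Submodule.span_induction with
  | mem g hg =>
    obtain ⟨i, ⟨hi1, him⟩, rfl⟩ := hg
    have hval : ∀ k < m, ((k : Fin m) : ℕ) = k := fun k hk => Fin.val_cast_of_lt hk
    intro r
    beta_reduce
    split_ifs with h
    · rw [sub_zero]
      exact prefixBoundedCoeffSum_mul_X_sq (by rw [hval _ (by omega)]; omega) r
    · refine prefixBoundedCoeffSum_mul_X_sq_sub ?_ r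
      rw [hval _ (by omega), hval _ (by omega)]
      omega
  | zero => simp
  | add y z _ _ hy hz => intro r; rw [mul_add, map_add, hy, hz, add_zero]
  | smul c y _ hy => intro r; rw [smul_eq_mul, ← mul_assoc, hy]

theorem prod_xQ_ne_zero : ∏ i ∈ Icc 1 m, xQ m i ≠ 0 := by
  have hprod : ∏ i ∈ Icc 1 m, (X ((i - 1 : ℕ) : Fin m) : MvPolynomial (Fin m) (ZMod 2)) =
      monomial (∑ j : Fin m, Finsupp.single j 1) 1 := by
    rw [monomial_sum_one, ← Ico_add_one_right_eq_Icc]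
    have := prod_Ico_add' (fun i => (X ((i - 1 : ℕ) : Fin m) : MvPolynomial (Fin m) (ZMod 2))) 0 m 1
    simp only [zero_add, Nat.add_sub_cancel] at this
    rw [← this, ← range_eq_Ico, ← Fin.prod_univ_eq_prod_range]
    simp [X]
  intro h
  have hmem : ∏ i ∈ Icc 1 m, (X ((i - 1 : ℕ) : Fin m) : MvPolynomial (Fin m) (ZMod 2)) ∈ Qrel m :=
    Ideal.Quotient.eq_zero_iff_mem.1 (by rwa [map_prod])
  have := prefixBoundedCoeffSum_eq_zero_of_mem_Qrel m hmem
  rw [hprod, prefixBoundedCoeffSum_monomial, if_pos prefixBounded_sum_single_one] at this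
  exact one_ne_zero this

theorem prod_xQ_pow_Icc_succ_eq (e : ℕ → ℕ) (he : ∑ i ∈ Icc 1 m, e i = m) {D : ℕ} (hDm : D ≤ m)
    (hD : ∑ i ∈ Icc 1 D, e i = D) (hbound : ∀ k, D ≤ k → k ≤ m → ∑ i ∈ Icc 1 k, e i ≤ k) :
    ∏ i ∈ Icc (D + 1) m, xQ m i ^ e i = ∏ i ∈ Icc (D + 1) m, xQ m i := by
  have hsplit : ∀ k, D ≤ k → ∑ i ∈ Icc 1 k, e i = D + ∑ i ∈ Icc (D + 1) k, e i := fun k hk => by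
    rw [← sum_Icc_add_sum_Icc_succ (k := D) (by omega) hk, hD]
  have hpos : ∀ i ∈ Icc (D + 1) m, 0 < i := fun i hi => by simp at hi; omega
  calc ∏ i ∈ Icc (D + 1) m, xQ m i ^ e i = ∏ i ∈ Icc (D + 1) m, xQ₀ m i ^ e i :=
        prod_congr rfl fun i hi => by rw [xQ₀_of_pos m (hpos i hi)]
    _ = ∏ i ∈ Icc (D + 1 - 0) m, xQ₀ m i := by
        refine prod_pow_Icc_of_sq_eq (by simp [xQ₀]) (fun _ => xQ₀_sq m) e le_rfl
          (fun k hk => ?_) (by have := hsplit m hDm; omega)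
        have := hbound k (by simp at hk; omega) (by simp at hk; omega)
        have := hsplit k (by simp at hk; omega)
        omega
    _ = ∏ i ∈ Icc (D + 1) m, xQ m i := prod_congr rfl fun i hi => xQ₀_of_pos m (hpos i hi)

theorem prod_xQ_pow_eq_zero (e : ℕ → ℕ) {j : ℕ} (hjm : j ≤ m) (hj : j < ∑ i ∈ Icc 1 j, e i) :
    ∏ i ∈ Icc 1 m, xQ m i ^ e i = 0 := by
  have := prod_pow_Icc_eq_zero_of_sq_eq (by simp [xQ₀]) (fun _ => xQ₀_sq m) e hj hjm le_rfl
  rwa [prod_congr rfl fun i hi => by rw [xQ₀_of_pos m (by simp at hi; omega)]] at this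

theorem prod_xQ_pow_eq_zero_iff (e : ℕ → ℕ) (he : ∑ i ∈ Icc 1 m, e i = m) :
    ∏ i ∈ Icc 1 m, xQ m i ^ e i = 0 ↔ ∃ j ≤ m, j < ∑ i ∈ Icc 1 j, e i := by
  refine ⟨fun h => ?_, fun ⟨j, hjm, hj⟩ => prod_xQ_pow_eq_zero m e hjm hj⟩
  by_contra! hbound
  have := prod_xQ_pow_Icc_succ_eq m e he (Nat.zero_le m) (by simp) fun k _ hk => hbound k hk
  exact prod_xQ_ne_zero m (by rwa [zero_add, h, eq_comm] at this)

end Qring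

theorem statement2_general (m : ℕ) [NeZero m] (e : ℕ → ℕ)
    (he : ∑ i ∈ Finset.Icc 1 m, e i = m) :
    (∏ i ∈ Finset.Icc 1 m, xQ m i ^ e i) = 0 ↔
      ∃ d D, 1 ≤ d ∧ d < D ∧ D ≤ m ∧ (∑ i ∈ Finset.Icc 1 d, e i) = D ∧
        (∀ i, d < i → i ≤ D → e i = 0) ∧
        (∏ i ∈ Finset.Icc (D + 1) m, xQ m i ^ e i) = ∏ i ∈ Finset.Icc (D + 1) m, xQ m i := by
  rw [prod_xQ_pow_eq_zero_iff m e he]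
  constructor
  · rintro ⟨j, hjm, hj⟩
    obtain ⟨d, D, hd, hdD, hDm, hsum, hgap, hD, hbound⟩ := exists_gap_of_lt_sum_Icc e he hjm hj
    exact ⟨d, D, hd, hdD, hDm, hsum, hgap, prod_xQ_pow_Icc_succ_eq m e he hDm hD hbound⟩
  · rintro ⟨d, D, -, hdD, hDm, hsum, -, -⟩
    exact ⟨d, by omega, by omega⟩

/-- Corollary 2.7: a degree-`m` monomial is `0` in `Q_m` iff it decomposes as `A ⋅ B` where
`A = x_1^{e_1} ⋯ x_d^{e_d}` has degree `D > d`, there is a gap (`e_i = 0` for `d < i ≤ D`),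
and `B = x_{D+1}^{e_{D+1}} ⋯ x_m^{e_m}` equals `x_{D+1} ⋯ x_m` in `Q_m`. -/
theorem statement2 (m : ℕ) [NeZero m] (hm : 1 ≤ m) (e : ℕ → ℕ)
    (he : ∑ i ∈ Finset.Icc 1 m, e i = m) :
    (∏ i ∈ Finset.Icc 1 m, xQ m i ^ e i) = 0 ↔
      ∃ d D, 1 ≤ d ∧ d < D ∧ D ≤ m ∧ (∑ i ∈ Finset.Icc 1 d, e i) = D ∧
        (∀ i, d < i → i ≤ D → e i = 0) ∧
        (∏ i ∈ Finset.Icc (D + 1) m, xQ m i ^ e i) = ∏ i ∈ Finset.Icc (D + 1) m, xQ m i :=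
  statement2_general m e he
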